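/- Let A and Ã be symmetric n×n real matrices, both of rank at least k, with eigenvalues λ₁ ≥ … ≥ λₙ and λ̃₁ ≥ … ≥ λ̃ₙ respectively. If ‖A − Ã‖₂ < λ_k − λ_{k+1}, then d₂(V_{A,k}, V_{Ã,k}) ≤ ‖A − Ã‖₂ / (λ_k − λ_{k+1} − ‖A − Ã‖₂). -/

import Mathlib

open Matrix MeasureTheory

noncomputable section

/-- Euclidean norm of a vector in `ℝ^n`. -/
def vnorm {n : ℕ} (v : Fin n → ℝ) : ℝ := Real.sqrt (∑ i, v i ^ 2)

/-- Spectral norm of a matrix (operator norm as a map between Euclidean spaces). -/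
def spec {m n : ℕ} (M : Matrix (Fin m) (Fin n) ℝ) : ℝ :=
  ‖LinearMap.toContinuousLinearMap (Matrix.toEuclideanLin M)‖

/-- The four Moore-Penrose conditions. -/
def IsMP {m n : ℕ} (X : Matrix (Fin m) (Fin n) ℝ) (Y : Matrix (Fin n) (Fin m) ℝ) : Prop :=
  X * Y * X = X ∧ Y * X * Y = Y ∧ (X * Y)ᵀ = X * Y ∧ (Y * X)ᵀ = Y * X

/-- The Moore-Penrose pseudoinverse (it always exists and is unique, so this choice-based
definition picks out exactly the Moore-Penrose pseudoinverse). -/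
def pinv {m n : ℕ} (X : Matrix (Fin m) (Fin n) ℝ) : Matrix (Fin n) (Fin m) ℝ := by
  classical exact if h : ∃ Y, IsMP X Y then h.choose else 0

/-- Orthogonal projection onto the column space of a matrix: `P_X = X X⁺`. -/
def projCol {m n : ℕ} (X : Matrix (Fin m) (Fin n) ℝ) : Matrix (Fin m) (Fin m) ℝ := X * pinv X

/-- Distance between column spaces: `d₂(U, W) = ‖P_U - P_W‖₂`. -/
def d2 {m p q : ℕ} (U : Matrix (Fin m) (Fin p) ℝ) (W : Matrix (Fin m) (Fin q) ℝ) : ℝ :=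
  spec (projCol U - projCol W)

/-- `(U, s, V)` is a thin SVD of `X`: orthonormal columns, nonincreasing nonnegative
singular values, and `X = U (diag s) Vᵀ`. -/
def IsThinSVD {m n p : ℕ} (X : Matrix (Fin m) (Fin n) ℝ) (U : Matrix (Fin m) (Fin p) ℝ)
    (s : Fin p → ℝ) (V : Matrix (Fin n) (Fin p) ℝ) : Prop :=
  Uᵀ * U = 1 ∧ Vᵀ * V = 1 ∧ Antitone s ∧ (∀ i, 0 ≤ s i) ∧ X = U * Matrix.diagonal s * Vᵀ

/-- The matrix of the first `k` columns. -/
def firstCols {m p : ℕ} (U : Matrix (Fin m) (Fin p) ℝ) (k : ℕ) (h : k ≤ p) :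
    Matrix (Fin m) (Fin k) ℝ := U.submatrix id (Fin.castLE h)

/-- The matrix of the remaining columns (columns `k+1, …, p` in 1-based indexing). -/
def tailCols {m p : ℕ} (U : Matrix (Fin m) (Fin p) ℝ) (k : ℕ) (h : k ≤ p) :
    Matrix (Fin m) (Fin (p - k)) ℝ :=
  U.submatrix id (fun j => ⟨k + j.1, by have := j.2; omega⟩)

/-- `sv s i` is the `i`-th singular value (1-indexed), `0` past the end. -/
def sv {p : ℕ} (s : Fin p → ℝ) (i : ℕ) : ℝ := by
  classical exact if h : i - 1 < p then s ⟨i - 1, h⟩ else 0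

end


/-! Weyl's inequality `|λ̃ⱼ - λⱼ| ≤ ‖A - Ã‖` turns the gap `λ_k - λ_{k+1}` of `A` into the two
cross gaps `λ_k - λ̃_{k+1}` and `λ̃_k - λ_{k+1}`, each at least `λ_k - λ_{k+1} - ‖A - Ã‖`.
For spectral projections `P` of `A` and `P̃` of `Ã`, the operator `T = (1 - P̃) P` satisfies the
Sylvester equation `T A - Ã T = (1 - P̃)(A - Ã) P`; testing it against a top singular pair of `T`
gives `‖T‖ · gap ≤ ‖A - Ã‖` (Davis–Kahan). Finally `P - P̃` splits into the two orthogonal pieces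
`P (1 - P̃)` and `(1 - P) P̃`, so `‖P - P̃‖` is at most the larger of the two `sin Θ` bounds. -/

open scoped RealInnerProductSpace
open Module

local notation "𝓛" => Matrix.toEuclideanCLM (𝕜 := ℝ)

lemma Commute.one_sub_mul_sylvester {R : Type*} [Ring R] {A B P Q : R} (hAP : Commute A P)
    (hBQ : Commute B Q) : (1 - Q) * P * A - B * ((1 - Q) * P) = (1 - Q) * (A - B) * P := by
  have hBQ' : B * (1 - Q) = (1 - Q) * B := ((Commute.one_right B).sub_right hBQ).eq
  calc (1 - Q) * P * A - B * ((1 - Q) * P) = (1 - Q) * (P * A) - B * (1 - Q) * P := by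
        simp only [mul_assoc]
    _ = (1 - Q) * (A - B) * P := by rw [hBQ', ← hAP.eq]; noncomm_ring

section Operator

open ContinuousLinearMap

variable {E F : Type*} [NormedAddCommGroup E] [InnerProductSpace ℝ E]
  [NormedAddCommGroup F] [InnerProductSpace ℝ F]

lemma IsIdempotentElem.apply_apply {P : E →L[ℝ] E} (hP : IsIdempotentElem P) (x : E) :
    P (P x) = P x := by
  rw [← mul_apply_eq_comp, hP.eq]

lemma IsStarProjection.inner_apply_one_sub_apply [CompleteSpace E] {P : E →L[ℝ] E}
    (hP : IsStarProjection P) (x y : E) : ⟪P x, (1 - P) y⟫ = 0 := by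
  rw [← adjoint_inner_right, ← star_eq_adjoint, hP.isSelfAdjoint.star_eq, ← mul_apply_eq_comp,
    hP.mul_one_sub_self, _root_.zero_apply, inner_zero_right]

lemma IsStarProjection.norm_sq_apply_add_norm_sq_one_sub_apply [CompleteSpace E]
    {P : E →L[ℝ] E} (hP : IsStarProjection P) (x : E) :
    ‖P x‖ ^ 2 + ‖(1 - P) x‖ ^ 2 = ‖x‖ ^ 2 := by
  have h := norm_add_sq_eq_norm_sq_add_norm_sq_real (hP.inner_apply_one_sub_apply x x)
  rw [← _root_.add_apply, add_sub_cancel, one_apply_eq_self] at h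
  simp only [sq, h]

theorem IsStarProjection.norm_sub_le_max [CompleteSpace E] {P Q : E →L[ℝ] E}
    (hP : IsStarProjection P) (hQ : IsStarProjection Q) :
    ‖P - Q‖ ≤ max ‖(1 - Q) * P‖ ‖(1 - P) * Q‖ := by
  set C := max ‖(1 - Q) * P‖ ‖(1 - P) * Q‖
  have hC : 0 ≤ C := (norm_nonneg _).trans (le_max_left _ _)
  have h₁ : ‖P * (1 - Q)‖ ≤ C := by
    rw [← norm_star, star_mul, hP.isSelfAdjoint.star_eq, hQ.one_sub.isSelfAdjoint.star_eq]
    exact le_max_left _ _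
  refine opNorm_le_bound _ hC fun x => ?_
  have hsplit : (P - Q) x = P ((1 - Q) x) - (1 - P) (Q x) := by
    simp only [_root_.sub_apply, map_sub]; abel
  have hP1 : ‖P ((1 - Q) x)‖ ≤ C * ‖(1 - Q) x‖ := by
    calc ‖P ((1 - Q) x)‖ = ‖(P * (1 - Q)) ((1 - Q) x)‖ := by
          rw [mul_apply_eq_comp, hQ.one_sub.isIdempotentElem.apply_apply]
      _ ≤ C * ‖(1 - Q) x‖ := (le_opNorm _ _).trans (by gcongr)
  have hP2 : ‖(1 - P) (Q x)‖ ≤ C * ‖Q x‖ := by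
    calc ‖(1 - P) (Q x)‖ = ‖((1 - P) * Q) (Q x)‖ := by
          rw [mul_apply_eq_comp, hQ.isIdempotentElem.apply_apply]
      _ ≤ C * ‖Q x‖ := (le_opNorm _ _).trans (by gcongr; exact le_max_right _ _)
  have hsq : ‖(P - Q) x‖ ^ 2 ≤ (C * ‖x‖) ^ 2 := by
    rw [hsplit, sq, norm_sub_sq_eq_norm_sq_add_norm_sq_real (hP.inner_apply_one_sub_apply _ _),
      mul_pow, ← hQ.norm_sq_apply_add_norm_sq_one_sub_apply x]
    nlinarith [norm_nonneg (P ((1 - Q) x)), norm_nonneg ((1 - P) (Q x))]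
  exact (pow_le_pow_iff_left₀ (norm_nonneg _) (by positivity) two_ne_zero).1 hsq

theorem ContinuousLinearMap.exists_norm_eq_one_norm_apply_eq_norm [FiniteDimensional ℝ E]
    [Nontrivial E] (T : E →L[ℝ] F) : ∃ u : E, ‖u‖ = 1 ∧ ‖T u‖ = ‖T‖ := by
  obtain ⟨u, hu, hmax⟩ := (isCompact_sphere (0 : E) 1).exists_isMaxOn
    (NormedSpace.sphere_nonempty.2 zero_le_one) T.continuous.norm.continuousOn
  rw [mem_sphere_zero_iff_norm] at hu
  refine ⟨u, hu, le_antisymm (by simpa [hu] using T.le_opNorm u) ?_⟩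
  exact opNorm_le_of_unit_norm (norm_nonneg _) fun x hx => hmax (mem_sphere_zero_iff_norm.2 hx)

theorem ContinuousLinearMap.adjoint_apply_apply_eq_of_norm_apply_eq [CompleteSpace E]
    [CompleteSpace F] (T : E →L[ℝ] F) {u : E} (hu : ‖u‖ = 1) (hTu : ‖T u‖ = ‖T‖) :
    adjoint T (T u) = ‖T‖ ^ 2 • u := by
  set S := adjoint T (T u)
  have hSu : ⟪S, u⟫ = ‖T‖ ^ 2 := by
    rw [adjoint_inner_left, real_inner_self_eq_norm_sq, hTu]
  have hS : ‖S‖ ≤ ‖T‖ ^ 2 := by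
    calc ‖S‖ ≤ ‖adjoint T‖ * ‖T u‖ := le_opNorm _ _
      _ = ‖T‖ ^ 2 := by rw [LinearIsometryEquiv.norm_map, hTu, sq]
  -- `‖S - ‖T‖² u‖² = ‖S‖² - ‖T‖⁴`, which is `≤ 0` by `hS`.
  have h : ‖S - ‖T‖ ^ 2 • u‖ ^ 2 ≤ 0 := by
    rw [norm_sub_sq_real, inner_smul_right, hSu, norm_smul, hu,
      Real.norm_of_nonneg (by positivity)]
    nlinarith [norm_nonneg S]
  rw [← sub_eq_zero, ← norm_eq_zero]
  exact pow_eq_zero_iff two_ne_zero |>.1 (le_antisymm h (sq_nonneg _))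

theorem ContinuousLinearMap.exists_singular_pair [FiniteDimensional ℝ E] [CompleteSpace F]
    {T : E →L[ℝ] F} (hT : T ≠ 0) :
    ∃ u w, ‖u‖ = 1 ∧ ‖w‖ = 1 ∧ T u = ‖T‖ • w ∧ adjoint T w = ‖T‖ • u := by
  obtain ⟨x, hx⟩ := DFunLike.ne_iff.1 hT
  have : Nontrivial E := nontrivial_of_ne x 0 fun h => hx (h ▸ map_zero T)
  obtain ⟨u, hu, hTu⟩ := T.exists_norm_eq_one_norm_apply_eq_norm
  have hσ : ‖T‖ ≠ 0 := norm_ne_zero_iff.2 hT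
  refine ⟨u, ‖T‖⁻¹ • T u, hu, ?_, ?_, ?_⟩
  · rw [norm_smul, hTu, norm_inv, norm_norm, inv_mul_cancel₀ hσ]
  · rw [smul_smul, mul_inv_cancel₀ hσ, one_smul]
  · rw [map_smul, T.adjoint_apply_apply_eq_of_norm_apply_eq hu hTu, smul_smul, sq,
      ← mul_assoc, inv_mul_cancel₀ hσ, one_mul]

theorem norm_one_sub_mul_le_div_of_rayleigh_gap [FiniteDimensional ℝ E] {A B P Q : E →L[ℝ] E}
    {a b : ℝ} (hP : IsStarProjection P) (hQ : IsStarProjection Q) (hAP : Commute A P)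
    (hBQ : Commute B Q) (hA : ∀ x, a * ‖P x‖ ^ 2 ≤ ⟪A (P x), P x⟫)
    (hB : ∀ x, ⟪B ((1 - Q) x), (1 - Q) x⟫ ≤ b * ‖(1 - Q) x‖ ^ 2) (hab : b < a) :
    ‖(1 - Q) * P‖ ≤ ‖A - B‖ / (a - b) := by
  set T := (1 - Q) * P
  set σ := ‖T‖
  rw [le_div_iff₀ (sub_pos.2 hab)]
  obtain hT | hT := eq_or_ne T 0
  · rw [show σ = 0 from norm_eq_zero.2 hT, zero_mul]
    exact norm_nonneg _
  obtain ⟨u, w, hu, hw, hTu, hTw⟩ := exists_singular_pair hT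
  have hT_adj : adjoint T = P * (1 - Q) := by
    rw [← star_eq_adjoint, star_mul, hP.isSelfAdjoint.star_eq, hQ.one_sub.isSelfAdjoint.star_eq]
  have hσ : 0 < σ := norm_pos_iff.2 hT
  have hu_range : P (σ⁻¹ • (1 - Q) w) = u := by
    rw [map_smul, ← mul_apply_eq_comp, ← hT_adj, hTw, smul_smul, inv_mul_cancel₀ hσ.ne', one_smul]
  have hw_range : (1 - Q) (σ⁻¹ • P u) = w := by
    rw [map_smul, ← mul_apply_eq_comp, hTu, smul_smul, inv_mul_cancel₀ hσ.ne', one_smul]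
  have hAu : a ≤ ⟪A u, u⟫ := by
    have := hA (σ⁻¹ • (1 - Q) w)
    rwa [hu_range, hu, one_pow, mul_one] at this
  have hBw : ⟪B w, w⟫ ≤ b := by
    have := hB (σ⁻¹ • P u)
    rwa [hw_range, hw, one_pow, mul_one] at this
  have h₁ : ⟪w, (T * A - B * T) u⟫ = σ * ⟪A u, u⟫ - σ * ⟪B w, w⟫ := by
    rw [_root_.sub_apply, mul_apply_eq_comp T A, mul_apply_eq_comp B T, inner_sub_right,
      ← adjoint_inner_left T, hTw, hTu, map_smul, inner_smul_right, inner_smul_left,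
      real_inner_comm w, real_inner_comm u]
    rfl
  have h₂ : ⟪w, ((1 - Q) * (A - B) * P) u⟫ = ⟪w, (A - B) u⟫ := by
    rw [mul_apply_eq_comp, ← hu_range, hP.isIdempotentElem.apply_apply, hu_range,
      mul_apply_eq_comp, ← adjoint_inner_left, ← star_eq_adjoint,
      hQ.one_sub.isSelfAdjoint.star_eq, ← hw_range, hQ.one_sub.isIdempotentElem.apply_apply]
  have hCS : ⟪w, (A - B) u⟫ ≤ ‖A - B‖ := by
    calc ⟪w, (A - B) u⟫ ≤ ‖w‖ * ‖(A - B) u‖ := real_inner_le_norm _ _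
      _ ≤ ‖w‖ * (‖A - B‖ * ‖u‖) := by gcongr; exact le_opNorm _ _
      _ = ‖A - B‖ := by rw [hw, hu, one_mul, mul_one]
  rw [Commute.one_sub_mul_sylvester hAP hBQ, h₂] at h₁
  calc σ * (a - b) ≤ σ * (⟪A u, u⟫ - ⟪B w, w⟫) := by gcongr
    _ = ⟪w, (A - B) u⟫ := by rw [mul_sub, h₁]
    _ ≤ ‖A - B‖ := hCS

theorem le_add_norm_sub_of_lt_finrank_add [FiniteDimensional ℝ E] {A B : E →L[ℝ] E}
    {U W : Submodule ℝ E} {α β : ℝ} (hUW : finrank ℝ E < finrank ℝ U + finrank ℝ W)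
    (hB : ∀ x ∈ U, β * ‖x‖ ^ 2 ≤ ⟪B x, x⟫) (hA : ∀ x ∈ W, ⟪A x, x⟫ ≤ α * ‖x‖ ^ 2) :
    β ≤ α + ‖B - A‖ := by
  obtain ⟨x, hxU, hxW, hx⟩ : ∃ x ∈ U, x ∈ W ∧ x ≠ 0 := by
    by_contra! h
    exact hUW.not_ge (Submodule.finrank_add_finrank_le_of_disjoint (Submodule.disjoint_def.2 h))
  have hE : ⟪(B - A) x, x⟫ ≤ ‖B - A‖ * ‖x‖ ^ 2 := by
    calc ⟪(B - A) x, x⟫ ≤ ‖(B - A) x‖ * ‖x‖ := real_inner_le_norm _ _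
      _ ≤ ‖B - A‖ * ‖x‖ * ‖x‖ := by gcongr; exact le_opNorm _ _
      _ = ‖B - A‖ * ‖x‖ ^ 2 := by ring
  have hsplit : ⟪B x, x⟫ = ⟪A x, x⟫ + ⟪(B - A) x, x⟫ := by
    rw [_root_.sub_apply, inner_sub_left]; ring
  have hx2 : 0 < ‖x‖ ^ 2 := by positivity
  nlinarith [hB x hxU, hA x hxW]

end Operator

section OrthogonalConjugation

variable {ι : Type*} [Fintype ι] [DecidableEq ι] {V : Matrix ι ι ℝ}

lemma conj_diagonal_mul_conj_diagonal (hV : Vᵀ * V = 1) (μ ν : ι → ℝ) :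
    V * diagonal μ * Vᵀ * (V * diagonal ν * Vᵀ) = V * diagonal (μ * ν) * Vᵀ := by
  calc V * diagonal μ * Vᵀ * (V * diagonal ν * Vᵀ)
      = V * diagonal μ * (Vᵀ * V) * diagonal ν * Vᵀ := by simp only [Matrix.mul_assoc]
    _ = V * diagonal (μ * ν) * Vᵀ := by
      rw [hV, Matrix.mul_one, Matrix.mul_assoc V, diagonal_mul_diagonal]; rfl

lemma transpose_conj_diagonal (μ : ι → ℝ) : (V * diagonal μ * Vᵀ)ᵀ = V * diagonal μ * Vᵀ := by
  rw [transpose_mul, transpose_mul, transpose_transpose, diagonal_transpose, Matrix.mul_assoc]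

lemma isStarProjection_toEuclideanCLM_conj_diagonal (hV : Vᵀ * V = 1) {w : ι → ℝ}
    (hw : w * w = w) : IsStarProjection (𝓛 (V * diagonal w * Vᵀ)) := by
  refine IsStarProjection.map ⟨?_, ?_⟩ _
  · rw [IsIdempotentElem, conj_diagonal_mul_conj_diagonal hV, hw]
  · rw [IsSelfAdjoint, star_eq_conjTranspose, conjTranspose_eq_transpose_of_trivial,
      transpose_conj_diagonal]

lemma commute_toEuclideanCLM_conj_diagonal (hV : Vᵀ * V = 1) (μ ν : ι → ℝ) :
    Commute (𝓛 (V * diagonal μ * Vᵀ)) (𝓛 (V * diagonal ν * Vᵀ)) := by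
  refine Commute.map ?_ _
  rw [Commute, SemiconjBy, conj_diagonal_mul_conj_diagonal hV, conj_diagonal_mul_conj_diagonal hV,
    mul_comm]

lemma inner_toEuclideanCLM_conj_diagonal (μ : ι → ℝ) (x : EuclideanSpace ℝ ι) :
    ⟪𝓛 (V * diagonal μ * Vᵀ) x, x⟫ = ∑ i, μ i * (Vᵀ *ᵥ x.ofLp) i ^ 2 := by
  rw [real_inner_comm, inner_toEuclideanCLM, ← mulVec_mulVec, ← mulVec_mulVec, dotProduct_mulVec,
    ← mulVec_transpose]
  simp only [dotProduct, mulVec_diagonal]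
  exact Finset.sum_congr rfl fun i _ => by ring

lemma norm_sq_eq_sum_transpose_mulVec_sq (hV : Vᵀ * V = 1) (x : EuclideanSpace ℝ ι) :
    ‖x‖ ^ 2 = ∑ i, (Vᵀ *ᵥ x.ofLp) i ^ 2 := by
  have h := inner_toEuclideanCLM_conj_diagonal (V := V) (fun _ => 1) x
  rw [diagonal_one, Matrix.mul_one, mul_eq_one_comm.1 hV, map_one] at h
  simpa [real_inner_self_eq_norm_sq] using h

lemma transpose_mulVec_toEuclideanCLM_conj_diagonal (hV : Vᵀ * V = 1) (w : ι → ℝ)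
    (y : EuclideanSpace ℝ ι) (i : ι) :
    (Vᵀ *ᵥ (𝓛 (V * diagonal w * Vᵀ) y).ofLp) i = w i * (Vᵀ *ᵥ y.ofLp) i := by
  rw [ofLp_toEuclideanCLM, mulVec_mulVec, ← Matrix.mul_assoc, ← Matrix.mul_assoc, hV,
    Matrix.one_mul, ← mulVec_mulVec, mulVec_diagonal]

lemma mul_norm_sq_le_inner_toEuclideanCLM_conj_diagonal (hV : Vᵀ * V = 1) {w μ : ι → ℝ} {c : ℝ}
    (h : ∀ i, w i ≠ 0 → c ≤ μ i) (y : EuclideanSpace ℝ ι) :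
    c * ‖𝓛 (V * diagonal w * Vᵀ) y‖ ^ 2
      ≤ ⟪𝓛 (V * diagonal μ * Vᵀ) (𝓛 (V * diagonal w * Vᵀ) y), 𝓛 (V * diagonal w * Vᵀ) y⟫ := by
  rw [inner_toEuclideanCLM_conj_diagonal, norm_sq_eq_sum_transpose_mulVec_sq hV, Finset.mul_sum]
  refine Finset.sum_le_sum fun i _ => ?_
  rw [transpose_mulVec_toEuclideanCLM_conj_diagonal hV]
  by_cases hi : w i = 0
  · simp [hi]
  · exact mul_le_mul_of_nonneg_right (h i hi) (sq_nonneg _)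

lemma inner_toEuclideanCLM_conj_diagonal_le_mul_norm_sq (hV : Vᵀ * V = 1) {w μ : ι → ℝ} {c : ℝ}
    (h : ∀ i, w i ≠ 0 → μ i ≤ c) (y : EuclideanSpace ℝ ι) :
    ⟪𝓛 (V * diagonal μ * Vᵀ) (𝓛 (V * diagonal w * Vᵀ) y), 𝓛 (V * diagonal w * Vᵀ) y⟫
      ≤ c * ‖𝓛 (V * diagonal w * Vᵀ) y‖ ^ 2 := by
  rw [inner_toEuclideanCLM_conj_diagonal, norm_sq_eq_sum_transpose_mulVec_sq hV, Finset.mul_sum]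
  refine Finset.sum_le_sum fun i _ => ?_
  rw [transpose_mulVec_toEuclideanCLM_conj_diagonal hV]
  by_cases hi : w i = 0
  · simp [hi]
  · exact mul_le_mul_of_nonneg_right (h i hi) (sq_nonneg _)

lemma finrank_range_toEuclideanLin_conj_diagonal (hV : Vᵀ * V = 1) (w : ι → ℝ) :
    finrank ℝ (LinearMap.range (toEuclideanLin (V * diagonal w * Vᵀ)))
      = Fintype.card {i // w i ≠ 0} := by
  rw [toEuclideanLin_eq_toLin_orthonormal, ← rank_eq_finrank_range_toLin,
    rank_mul_eq_left_of_isUnit_det _ _ (isUnit_det_of_right_inverse hV),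
    rank_mul_eq_right_of_isUnit_det _ _ (isUnit_det_of_left_inverse hV), rank_diagonal]

end OrthogonalConjugation

section LeadingEigenvectors

variable {n : ℕ} {V : Matrix (Fin n) (Fin n) ℝ} {lam : Fin n → ℝ}

def leadingProj (V : Matrix (Fin n) (Fin n) ℝ) (m : ℕ) : Matrix (Fin n) (Fin n) ℝ :=
  V * diagonal (fun i : Fin n => if (i : ℕ) < m then 1 else 0) * Vᵀ

def trailingProj (V : Matrix (Fin n) (Fin n) ℝ) (m : ℕ) : Matrix (Fin n) (Fin n) ℝ :=
  V * diagonal (fun i : Fin n => if (i : ℕ) < m then 0 else 1) * Vᵀ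

lemma firstCols_transpose_mul_self (hV : Vᵀ * V = 1) {m : ℕ} (hm : m ≤ n) :
    (firstCols V m hm)ᵀ * firstCols V m hm = 1 := by
  rw [firstCols, transpose_submatrix, ← submatrix_mul _ _ _ _ _ Function.bijective_id, hV,
    submatrix_one _ (Fin.castLE_injective hm)]

lemma firstCols_mul_transpose {m : ℕ} (hm : m ≤ n) :
    firstCols V m hm * (firstCols V m hm)ᵀ = leadingProj V m := by
  ext a b
  simp only [firstCols, leadingProj, mul_apply, submatrix_apply, transpose_apply, id_eq,
    diagonal_apply, mul_ite, mul_zero, Finset.sum_ite_eq', Finset.mem_univ, if_true]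
  refine Fintype.sum_of_injective _ (Fin.castLE_injective hm) _ _ (fun i hi => ?_) (fun j => ?_)
  · rw [if_neg (fun h => hi ⟨⟨i, h⟩, rfl⟩), zero_mul]
  · simp [j.is_lt]

lemma toEuclideanCLM_trailingProj (hV : Vᵀ * V = 1) (m : ℕ) :
    𝓛 (trailingProj V m) = 1 - 𝓛 (leadingProj V m) := by
  have hsum : (fun i : Fin n => (if (i : ℕ) < m then (1 : ℝ) else 0) +
      if (i : ℕ) < m then 0 else 1) = fun _ => 1 := by
    funext i; split_ifs <;> simp
  rw [eq_sub_iff_add_eq', ← map_add, leadingProj, trailingProj, ← Matrix.add_mul, ← Matrix.mul_add,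
    diagonal_add, hsum, diagonal_one, Matrix.mul_one, mul_eq_one_comm.1 hV, map_one]

lemma isStarProjection_leadingProj (hV : Vᵀ * V = 1) (m : ℕ) :
    IsStarProjection (𝓛 (leadingProj V m)) :=
  isStarProjection_toEuclideanCLM_conj_diagonal hV <| by
    funext i; simp only [Pi.mul_apply]; split_ifs <;> simp

lemma commute_leadingProj (hV : Vᵀ * V = 1) (lam : Fin n → ℝ) (m : ℕ) :
    Commute (𝓛 (V * diagonal lam * Vᵀ)) (𝓛 (leadingProj V m)) :=
  commute_toEuclideanCLM_conj_diagonal hV _ _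

lemma mul_norm_sq_le_inner_leadingProj (hV : Vᵀ * V = 1) (hlam : Antitone lam) {m : ℕ}
    {j : Fin n} (hm : m ≤ j + 1) (y : EuclideanSpace ℝ (Fin n)) :
    lam j * ‖𝓛 (leadingProj V m) y‖ ^ 2
      ≤ ⟪𝓛 (V * diagonal lam * Vᵀ) (𝓛 (leadingProj V m) y), 𝓛 (leadingProj V m) y⟫ :=
  mul_norm_sq_le_inner_toEuclideanCLM_conj_diagonal hV (fun i hi => hlam <| by
    simp only [ne_eq, ite_eq_right_iff, one_ne_zero, imp_false, not_not] at hi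
    exact Fin.le_def.2 (by omega)) y

lemma inner_trailingProj_le_mul_norm_sq (hV : Vᵀ * V = 1) (hlam : Antitone lam) {m : ℕ}
    {j : Fin n} (hj : (j : ℕ) ≤ m) (y : EuclideanSpace ℝ (Fin n)) :
    ⟪𝓛 (V * diagonal lam * Vᵀ) (𝓛 (trailingProj V m) y), 𝓛 (trailingProj V m) y⟫
      ≤ lam j * ‖𝓛 (trailingProj V m) y‖ ^ 2 :=
  inner_toEuclideanCLM_conj_diagonal_le_mul_norm_sq hV (fun i hi => hlam <| by
    simp only [ne_eq, ite_eq_left_iff, one_ne_zero, imp_false, not_not, not_lt] at hi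
    exact Fin.le_def.2 (by omega)) y

lemma finrank_range_leadingProj (hV : Vᵀ * V = 1) {m : ℕ} (hm : m ≤ n) :
    finrank ℝ (LinearMap.range (toEuclideanLin (leadingProj V m))) = m := by
  rw [leadingProj, finrank_range_toEuclideanLin_conj_diagonal hV]
  refine (Fintype.card_congr (Equiv.subtypeEquivRight fun i => ?_)).trans
    (Fintype.card_fin_lt_of_le hm)
  split_ifs with h <;> simp [h]

lemma finrank_range_trailingProj (hV : Vᵀ * V = 1) {m : ℕ} (hm : m ≤ n) :
    finrank ℝ (LinearMap.range (toEuclideanLin (trailingProj V m))) = n - m := by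
  rw [trailingProj, finrank_range_toEuclideanLin_conj_diagonal hV]
  have hcompl := Fintype.card_subtype_compl (fun i : Fin n => (i : ℕ) < m)
  rw [Fintype.card_fin, Fintype.card_fin_lt_of_le hm] at hcompl
  rw [← hcompl]
  refine Fintype.card_congr (Equiv.subtypeEquivRight fun i => ?_)
  split_ifs with h <;> simp [h]

end LeadingEigenvectors

section Perturbation

variable {n : ℕ} {V Vt : Matrix (Fin n) (Fin n) ℝ} {lam lamt : Fin n → ℝ}

theorem eigenvalue_le_add_norm_sub (hV : Vᵀ * V = 1) (hVt : Vtᵀ * Vt = 1)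
    (hlam : Antitone lam) (hlamt : Antitone lamt) (j : Fin n) :
    lamt j ≤ lam j + ‖𝓛 (Vt * diagonal lamt * Vtᵀ) - 𝓛 (V * diagonal lam * Vᵀ)‖ := by
  refine le_add_norm_sub_of_lt_finrank_add
    (U := LinearMap.range (toEuclideanLin (leadingProj Vt (j + 1))))
    (W := LinearMap.range (toEuclideanLin (trailingProj V j))) ?_ ?_ ?_
  · rw [finrank_euclideanSpace_fin, finrank_range_leadingProj hVt j.is_lt,
      finrank_range_trailingProj hV j.is_lt.le]
    omega
  · rintro _ ⟨y, rfl⟩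
    exact mul_norm_sq_le_inner_leadingProj hVt hlamt le_rfl y
  · rintro _ ⟨y, rfl⟩
    exact inner_trailingProj_le_mul_norm_sq hV hlam le_rfl y

theorem norm_one_sub_leadingProj_mul_leadingProj_le (hV : Vᵀ * V = 1) (hVt : Vtᵀ * Vt = 1)
    (hlam : Antitone lam) (hlamt : Antitone lamt) {k : ℕ} (hkn : k < n)
    (hgap : lamt ⟨k, hkn⟩ < lam ⟨k - 1, (k.sub_le 1).trans_lt hkn⟩) :
    ‖(1 - 𝓛 (leadingProj Vt k)) * 𝓛 (leadingProj V k)‖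
      ≤ ‖𝓛 (V * diagonal lam * Vᵀ) - 𝓛 (Vt * diagonal lamt * Vtᵀ)‖
        / (lam ⟨k - 1, (k.sub_le 1).trans_lt hkn⟩ - lamt ⟨k, hkn⟩) := by
  refine norm_one_sub_mul_le_div_of_rayleigh_gap (isStarProjection_leadingProj hV k)
    (isStarProjection_leadingProj hVt k) (commute_leadingProj hV lam k)
    (commute_leadingProj hVt lamt k)
    (mul_norm_sq_le_inner_leadingProj hV hlam (j := ⟨k - 1, _⟩) le_tsub_add)
    (fun y => ?_) hgap
  rw [← toEuclideanCLM_trailingProj hVt]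
  exact inner_trailingProj_le_mul_norm_sq hVt hlamt (j := ⟨k, hkn⟩) le_rfl y

end Perturbation

section PseudoInverse

variable {m p : ℕ} {X : Matrix (Fin m) (Fin p) ℝ}

lemma isMP_transpose (hX : Xᵀ * X = 1) : IsMP X Xᵀ := by
  refine ⟨?_, ?_, ?_, ?_⟩
  · rw [Matrix.mul_assoc, hX, Matrix.mul_one]
  · rw [Matrix.mul_assoc, ← Matrix.mul_assoc, hX, Matrix.one_mul]
  · rw [transpose_mul, transpose_transpose]
  · rw [hX, transpose_one]

lemma mul_eq_mul_transpose_of_isMP (hX : Xᵀ * X = 1) {Y : Matrix (Fin p) (Fin m) ℝ}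
    (hY : IsMP X Y) : X * Y = X * Xᵀ := by
  obtain ⟨hXYX, -, hXY, -⟩ := hY
  calc X * Y = X * Xᵀ * (X * Y) := by rw [Matrix.mul_assoc X, ← Matrix.mul_assoc Xᵀ, hX,
        Matrix.one_mul]
    _ = X * Xᵀ * (X * Y)ᵀ := by rw [hXY]
    _ = X * (X * Y * X)ᵀ := by rw [transpose_mul (X * Y) X, Matrix.mul_assoc]
    _ = X * Xᵀ := by rw [hXYX]

lemma projCol_eq_mul_transpose (hX : Xᵀ * X = 1) : projCol X = X * Xᵀ := by
  have hex : ∃ Y, IsMP X Y := ⟨Xᵀ, isMP_transpose hX⟩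
  rw [projCol, pinv, dif_pos hex]
  exact mul_eq_mul_transpose_of_isMP hX hex.choose_spec

end PseudoInverse

lemma spec_eq_norm_toEuclideanCLM {n : ℕ} (M : Matrix (Fin n) (Fin n) ℝ) : spec M = ‖𝓛 M‖ :=
  rfl

/-- Davis–Kahan with Weyl's inequality.
If `A, Ã` are symmetric `n×n` matrices of rank at least `k` and
`‖A − Ã‖₂ < λ_k(A) − λ_{k+1}(A)`, then
`d₂(V_{A,k}, V_{Ã,k}) ≤ ‖A − Ã‖₂ / (λ_k − λ_{k+1} − ‖A − Ã‖₂)`. -/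
theorem statement1
    (n k : ℕ) (hkn : k < n)
    (A At : Matrix (Fin n) (Fin n) ℝ)
    (VA VAt : Matrix (Fin n) (Fin n) ℝ) (lamA lamAt : Fin n → ℝ)
    (hVA : VAᵀ * VA = 1) (hVAt : VAtᵀ * VAt = 1)
    (hlamA : Antitone lamA) (hlamAt : Antitone lamAt)
    (hdecA : A = VA * Matrix.diagonal lamA * VAᵀ)
    (hdecAt : At = VAt * Matrix.diagonal lamAt * VAtᵀ)
    (hpert : spec (A - At) < lamA ⟨k - 1, by omega⟩ - lamA ⟨k, hkn⟩) :
    d2 (firstCols VA k hkn.le) (firstCols VAt k hkn.le)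
      ≤ spec (A - At) / (lamA ⟨k - 1, by omega⟩ - lamA ⟨k, hkn⟩ - spec (A - At)) := by
  subst hdecA hdecAt
  rw [spec_eq_norm_toEuclideanCLM, map_sub] at hpert ⊢
  rw [d2, projCol_eq_mul_transpose (firstCols_transpose_mul_self hVA hkn.le),
    projCol_eq_mul_transpose (firstCols_transpose_mul_self hVAt hkn.le), firstCols_mul_transpose,
    firstCols_mul_transpose, spec_eq_norm_toEuclideanCLM, map_sub]
  have weyl₁ := eigenvalue_le_add_norm_sub hVA hVAt hlamA hlamAt ⟨k, hkn⟩
  have weyl₂ := eigenvalue_le_add_norm_sub hVAt hVA hlamAt hlamA ⟨k - 1, by omega⟩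
  rw [norm_sub_rev] at weyl₁
  have dk₁ := norm_one_sub_leadingProj_mul_leadingProj_le hVA hVAt hlamA hlamAt hkn
    (by linarith)
  have dk₂ := norm_one_sub_leadingProj_mul_leadingProj_le hVAt hVA hlamAt hlamA hkn
    (by linarith)
  rw [norm_sub_rev] at dk₂
  refine (IsStarProjection.norm_sub_le_max (isStarProjection_leadingProj hVA k)
    (isStarProjection_leadingProj hVAt k)).trans (max_le (dk₁.trans ?_) (dk₂.trans ?_)) <;>
  exact div_le_div_of_nonneg_left (norm_nonneg _) (by linarith) (by linarith)
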